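/- (Theorem 1, convergent case p = 2) Let σ > 0, let k be an even nonnegative integer, and let ε > 0 satisfy 2εσ² < 1. Then the series Σ_{n=0}^{∞} ((−ε)^n / n!) (2n+k−1)!! σ^{2n+k} converges and equals ∫_ℝ p_G(x) x^k exp(−ε x²) dx, which in turn equals (k−1)!! σ^k (1 + 2εσ²)^{−(k+1)/2}. -/

import Mathlib

/-!
Multiplying the Gaussian density by `exp (-c x²)` gives `(1 + 2cσ²)^(-1/2)` times the Gaussian
density of standard deviation `σ / √(1 + 2cσ²)`, so the integral is an even Gaussian moment,
`(k-1)‼ σ^k` up to scaling; the moments themselves come from the `Γ`-integral and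
`Γ(m + 1/2) = (2m-1)‼ √π / 2^m`. The series is the power series of `exp (-εx²)` integrated
term by term: the integrated absolute series has ratio `εσ² (2n+k+1)/(n+1) → 2εσ² < 1`.
-/

open MeasureTheory Real

/-- The centered Gaussian density with standard deviation `σ`. -/
noncomputable def pG (σ x : ℝ) : ℝ :=
  (1 / (Real.sqrt (2 * Real.pi) * σ)) * Real.exp (-x ^ 2 / (2 * σ ^ 2))

open scoped Nat

theorem integrable_pow_mul_exp_neg_mul_sq {b : ℝ} (hb : 0 < b) (n : ℕ) :
    Integrable fun x : ℝ => x ^ n * exp (-b * x ^ 2) := by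
  simpa only [rpow_natCast] using
    integrable_rpow_mul_exp_neg_mul_sq hb (s := n) (by linarith [n.cast_nonneg (α := ℝ)])

theorem integral_pow_mul_exp_neg_mul_sq_of_even {b : ℝ} (hb : 0 < b) {k : ℕ} (hk : Even k) :
    ∫ x : ℝ, x ^ k * exp (-b * x ^ 2) =
      b ^ (-((k : ℝ) + 1) / 2) * Gamma (((k : ℝ) + 1) / 2) := by
  have habs : ∀ x : ℝ, x ^ k * exp (-b * x ^ 2) = |x| ^ (k : ℝ) * exp (-b * |x| ^ (2 : ℝ)) := by
    intro x
    rw [rpow_natCast, rpow_two, sq_abs, pow_abs, abs_of_nonneg (hk.pow_nonneg x)]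
  simp_rw [habs]
  rw [integral_comp_abs (f := fun y => y ^ (k : ℝ) * exp (-b * y ^ (2 : ℝ))),
    integral_rpow_mul_exp_neg_mul_rpow two_pos (by linarith [k.cast_nonneg (α := ℝ)]) hb]
  ring

theorem rpow_neg_add_one_div_two {a : ℝ} (ha : 0 < a) (k : ℕ) :
    a ^ (-((k : ℝ) + 1) / 2) = ((√a) ^ k * √a)⁻¹ := by
  rw [neg_div, rpow_neg ha.le, sqrt_eq_rpow, ← rpow_natCast, ← rpow_mul ha.le, ← rpow_add ha]
  ring_nf

theorem pG_nonneg {σ : ℝ} (hσ : 0 ≤ σ) (x : ℝ) : 0 ≤ pG σ x := by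
  rw [pG]
  positivity

theorem pG_mul_pow (σ x : ℝ) (j : ℕ) :
    pG σ x * x ^ j = (√(2 * π) * σ)⁻¹ * (x ^ j * exp (-(2 * σ ^ 2)⁻¹ * x ^ 2)) := by
  rw [pG]
  ring_nf

theorem integrable_pG_mul_pow {σ : ℝ} (hσ : 0 < σ) (j : ℕ) :
    Integrable fun x : ℝ => pG σ x * x ^ j := by
  simp_rw [pG_mul_pow]
  exact (integrable_pow_mul_exp_neg_mul_sq (by positivity) j).const_mul _

theorem integral_pG_mul_pow_of_even {σ : ℝ} (hσ : 0 < σ) {k : ℕ} (hk : Even k) :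
    ∫ x : ℝ, pG σ x * x ^ k = (k - 1)‼ * σ ^ k := by
  obtain ⟨m, rfl⟩ := hk
  rw [← two_mul]
  have hb : (0 : ℝ) < (2 * σ ^ 2)⁻¹ := by positivity
  have hexp : -(((2 * m : ℕ) : ℝ) + 1) / 2 = -((m : ℝ) + 1 / 2) := by push_cast; ring
  have hhalf : (((2 * m : ℕ) : ℝ) + 1) / 2 = (m : ℝ) + 1 / 2 := by push_cast; ring
  simp_rw [pG_mul_pow]
  rw [integral_const_mul, integral_pow_mul_exp_neg_mul_sq_of_even hb (even_two_mul m), hexp,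
    hhalf, Gamma_nat_add_half, rpow_neg hb.le, inv_rpow (by positivity), inv_inv,
    rpow_add (by positivity), rpow_natCast, ← sqrt_eq_rpow, sqrt_mul zero_le_two,
    sqrt_mul' _ (sq_nonneg σ), sqrt_sq hσ.le]
  field_simp
  ring

theorem pG_mul_exp_neg_mul_sq {σ c : ℝ} (hσ : 0 < σ) (hc : 0 < 1 + 2 * c * σ ^ 2) (x : ℝ) :
    pG σ x * exp (-c * x ^ 2) =
      (√(1 + 2 * c * σ ^ 2))⁻¹ * pG (σ / √(1 + 2 * c * σ ^ 2)) x := by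
  have hs : 0 < √(1 + 2 * c * σ ^ 2) := sqrt_pos.2 hc
  have hexp : -x ^ 2 / (2 * σ ^ 2) + -c * x ^ 2 =
      -x ^ 2 / (2 * (σ / √(1 + 2 * c * σ ^ 2)) ^ 2) := by
    rw [div_pow, sq_sqrt hc.le]
    field_simp
    ring
  rw [pG, pG, mul_assoc, ← exp_add, hexp]
  generalize √(1 + 2 * c * σ ^ 2) = s at hs ⊢
  field_simp

theorem integral_pG_mul_pow_mul_exp_neg_mul_sq {σ c : ℝ} (hσ : 0 < σ)
    (hc : 0 < 1 + 2 * c * σ ^ 2) {k : ℕ} (hk : Even k) :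
    ∫ x : ℝ, pG σ x * x ^ k * exp (-c * x ^ 2) =
      (k - 1)‼ * σ ^ k * (1 + 2 * c * σ ^ 2) ^ (-((k : ℝ) + 1) / 2) := by
  have hs : 0 < √(1 + 2 * c * σ ^ 2) := sqrt_pos.2 hc
  have htilt : ∀ x, pG σ x * x ^ k * exp (-c * x ^ 2) =
      (√(1 + 2 * c * σ ^ 2))⁻¹ * (pG (σ / √(1 + 2 * c * σ ^ 2)) x * x ^ k) := by
    intro x
    rw [mul_right_comm, pG_mul_exp_neg_mul_sq hσ hc, mul_assoc]
  simp_rw [htilt]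
  rw [integral_const_mul, integral_pG_mul_pow_of_even (div_pos hσ hs) hk,
    rpow_neg_add_one_div_two hc]
  generalize √(1 + 2 * c * σ ^ 2) = s at hs ⊢
  rw [div_pow]
  field_simp

theorem hasSum_integral_mul_exp_mul {α : Type*} [MeasurableSpace α] {μ : Measure α}
    {f g : α → ℝ} {t : ℝ} (hint : ∀ n : ℕ, Integrable (fun a => f a * g a ^ n) μ)
    (hsum : Summable fun n : ℕ => |t| ^ n / n ! * ∫ a, |f a * g a ^ n| ∂μ) :
    HasSum (fun n : ℕ => t ^ n / n ! * ∫ a, f a * g a ^ n ∂μ)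
      (∫ a, f a * exp (t * g a) ∂μ) := by
  have hseries : ∀ a, HasSum (fun n : ℕ => t ^ n / n ! * (f a * g a ^ n))
      (f a * exp (t * g a)) := by
    intro a
    have := (NormedSpace.expSeries_div_hasSum_exp (t * g a)).mul_left (f a)
    rw [← exp_eq_exp_ℝ] at this
    simpa only [mul_pow, mul_div_assoc', mul_comm, mul_left_comm] using this
  have hnorm : ∀ n : ℕ, ∫ a, ‖t ^ n / n ! * (f a * g a ^ n)‖ ∂μ =
      |t| ^ n / n ! * ∫ a, |f a * g a ^ n| ∂μ := by
    intro n
    rw [← integral_const_mul]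
    congr 1 with a
    rw [Real.norm_eq_abs, abs_mul, abs_div, abs_pow, Nat.abs_cast]
  have := hasSum_integral_of_summable_integral_norm (fun n => (hint n).const_mul (t ^ n / n !))
    (by simpa only [hnorm] using hsum)
  simp_rw [integral_const_mul, fun a => (hseries a).tsum_eq] at this
  exact this

open Filter Topology in
theorem summable_pow_div_factorial_mul_doubleFactorial {x : ℝ} (hx : 2 * |x| < 1) (k : ℕ) :
    Summable fun n : ℕ => x ^ n / n ! * (2 * n + k - 1)‼ := by
  have hratio : ∀ n : ℕ, ‖x ^ (n + 1) / (n + 1)! * ((2 * (n + 1) + k - 1)‼ : ℝ)‖ =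
      |x| * ((2 * n + k + 1) / (n + 1)) * ‖x ^ n / n ! * ((2 * n + k - 1)‼ : ℝ)‖ := by
    intro n
    rw [show 2 * (n + 1) + k - 1 = 2 * n + k + 1 by omega, Nat.doubleFactorial_add_one,
      Nat.factorial_succ]
    simp only [norm_mul, norm_div, norm_pow, Real.norm_eq_abs, Nat.abs_cast]
    push_cast
    field_simp
    ring
  have hlim : Tendsto (fun n : ℕ => |x| * ((2 * n + k + 1) / (n + 1))) atTop (𝓝 (|x| * 2)) := by
    have hsplit : ∀ n : ℕ, ((2 * n + k + 1) / (n + 1) : ℝ) = 2 + (k - 1) * (1 / (n + 1)) := by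
      intro n
      field_simp
      ring
    simp_rw [hsplit]
    simpa using
      ((tendsto_one_div_add_atTop_nhds_zero_nat.const_mul ((k : ℝ) - 1)).const_add 2).const_mul |x|
  obtain ⟨r, hxr, hr⟩ := exists_between (show |x| * 2 < 1 by linarith)
  refine summable_of_ratio_norm_eventually_le hr ?_
  filter_upwards [hlim.eventually (ge_mem_nhds hxr)] with n hn
  rw [hratio]
  exact mul_le_mul_of_nonneg_right hn (norm_nonneg _)

theorem stmt5 (σ : ℝ) (hσ : 0 < σ) (k : ℕ) (hk : Even k)
    (ε : ℝ) (hε : 0 < ε) (h : 2 * ε * σ ^ 2 < 1) :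
    HasSum
      (fun n : ℕ =>
        (-ε) ^ n / (n.factorial : ℝ) *
          (Nat.doubleFactorial (2 * n + k - 1) : ℝ) * σ ^ (2 * n + k))
      (∫ x : ℝ, pG σ x * x ^ k * Real.exp (-ε * x ^ 2)) ∧
    (∫ x : ℝ, pG σ x * x ^ k * Real.exp (-ε * x ^ 2)) =
      (Nat.doubleFactorial (k - 1) : ℝ) * σ ^ k *
        (1 + 2 * ε * σ ^ 2) ^ (-((k : ℝ) + 1) / 2) := by
  have hpow : ∀ (n : ℕ) (x : ℝ), pG σ x * x ^ k * (x ^ 2) ^ n = pG σ x * x ^ (2 * n + k) :=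
    fun n x => by ring
  have hmoment : ∀ n : ℕ,
      ∫ x : ℝ, pG σ x * x ^ k * (x ^ 2) ^ n = (2 * n + k - 1)‼ * σ ^ (2 * n + k) := fun n => by
    simp_rw [hpow]
    exact integral_pG_mul_pow_of_even hσ ((even_two_mul n).add hk)
  have hint : ∀ n : ℕ, Integrable fun x : ℝ => pG σ x * x ^ k * (x ^ 2) ^ n := fun n => by
    simp_rw [hpow]
    exact integrable_pG_mul_pow hσ _
  have habs : ∀ (n : ℕ) (x : ℝ),
      |pG σ x * x ^ k * (x ^ 2) ^ n| = pG σ x * x ^ k * (x ^ 2) ^ n := fun n x =>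
    abs_of_nonneg (mul_nonneg (mul_nonneg (pG_nonneg hσ.le x) (hk.pow_nonneg x)) (by positivity))
  have hsum : Summable fun n : ℕ =>
      |-ε| ^ n / n ! * ∫ x : ℝ, |pG σ x * x ^ k * (x ^ 2) ^ n| := by
    simp_rw [habs, hmoment, abs_neg, abs_of_pos hε]
    have hεσ : 2 * |ε * σ ^ 2| < 1 := by rwa [abs_of_pos (by positivity), ← mul_assoc]
    refine ((summable_pow_div_factorial_mul_doubleFactorial hεσ k).mul_right (σ ^ k)).congr
      fun n => ?_
    ring
  refine ⟨?_, integral_pG_mul_pow_mul_exp_neg_mul_sq hσ (by positivity) hk⟩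
  simpa only [hmoment, ← mul_assoc] using hasSum_integral_mul_exp_mul hint hsum
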